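/- For fixed k, define u^k(B^N_1) := k!·ω_k·π^{-k}·(4N)^{-k/2}·μ_k(B^N_1), where μ_k(B^N_1) = (ω_N/ω_{N-k})·C(N,k). Then u^k(B^N_1) → ω_k/(2π)^{k/2} as N → ∞. -/

import Mathlib

open MeasureTheory Filter Real

/-- `unitBallVol n` is the Lebesgue volume of the unit ball in `ℝ^n`. -/
noncomputable def unitBallVol (n : ℕ) : ℝ :=
  (volume (Metric.ball (0 : EuclideanSpace ℝ (Fin n)) 1)).toReal

lemma unitBallVol_eq (n : ℕ) :
    unitBallVol n = Real.sqrt π ^ n / Real.Gamma (n / 2 + 1) := by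
  rcases Nat.eq_zero_or_pos n with h | h
  · subst h
    simp only [unitBallVol, pow_zero, Nat.cast_zero, zero_div, zero_add, Real.Gamma_one]
    rw [show (Metric.ball (0 : EuclideanSpace ℝ (Fin 0)) 1) = Set.univ by
      ext x; simp [Metric.mem_ball]; rw [Subsingleton.elim x 0]; simp]
    have := (EuclideanSpace.volume_preserving_symm_measurableEquiv_toLp (ι := Fin 0)).measure_preimage
        (MeasurableSet.univ (α := Fin 0 → ℝ)).nullMeasurableSet
    simp only [Set.preimage_univ] at this
    rw [this, MeasureTheory.volume_pi, Measure.pi_univ]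
    simp
  · have : Nonempty (Fin n) := ⟨⟨0, h⟩⟩
    rw [unitBallVol, EuclideanSpace.volume_ball]
    rw [ENNReal.ofReal_one, one_pow, one_mul, ENNReal.toReal_ofReal]
    · simp
    · positivity

lemma interp_upper {x s : ℝ} (hx : 0 < x) (hs : 0 < s) (hs1 : s < 1) :
    Gamma (x + s) ≤ Gamma x * x ^ s := by
  have h := Real.Gamma_mul_add_mul_le_rpow_Gamma_mul_rpow_Gamma (s := x) (t := x + 1)
    (a := 1 - s) (b := s) hx (by linarith) (by linarith) hs (by ring)
  have e1 : (1 - s) * x + s * (x + 1) = x + s := by ring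
  rw [e1, Real.Gamma_add_one hx.ne'] at h
  have hG : 0 < Gamma x := Real.Gamma_pos_of_pos hx
  calc Gamma (x + s) ≤ Gamma x ^ (1 - s) * (x * Gamma x) ^ s := h
    _ = Gamma x * x ^ s := by
        rw [Real.mul_rpow hx.le hG.le, ← mul_assoc,
          show Gamma x ^ (1-s) * x ^ s * Gamma x ^ s
            = Gamma x ^ (1-s) * Gamma x ^ s * x ^ s by ring,
          ← Real.rpow_add hG]
        norm_num

lemma interp_lower {x s : ℝ} (hx : 0 < x) (hs : 0 < s) (hs1 : s < 1) :
    x * Gamma x ≤ Gamma (x + s) * (x + s) ^ (1 - s) := by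
  have h := Real.Gamma_mul_add_mul_le_rpow_Gamma_mul_rpow_Gamma (s := x + s) (t := x + s + 1)
    (a := s) (b := 1 - s) (by linarith) (by linarith) hs (by linarith) (by ring)
  have e1 : s * (x + s) + (1 - s) * (x + s + 1) = x + 1 := by ring
  rw [e1, Real.Gamma_add_one hx.ne', Real.Gamma_add_one (by positivity : x + s ≠ 0)] at h
  have hG : 0 < Gamma (x + s) := Real.Gamma_pos_of_pos (by linarith)
  calc x * Gamma x ≤ Gamma (x+s) ^ s * ((x+s) * Gamma (x+s)) ^ (1-s) := h
    _ = Gamma (x + s) * (x + s) ^ (1 - s) := by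
        rw [Real.mul_rpow (by linarith) hG.le,
          show Gamma (x+s) ^ s * ((x+s) ^ (1-s) * Gamma (x+s) ^ (1-s))
            = Gamma (x+s) ^ s * Gamma (x+s) ^ (1-s) * (x+s) ^ (1-s) by ring,
          ← Real.rpow_add hG]
        norm_num

lemma wendel01 {s : ℝ} (hs : 0 < s) (hs1 : s < 1) :
    Tendsto (fun x : ℝ => Gamma (x + s) / (Gamma x * x ^ s)) atTop (nhds 1) := by
  have hlow : ∀ x : ℝ, 0 < x →
      (x / (x + s)) ^ (1 - s) ≤ Gamma (x + s) / (Gamma x * x ^ s) := by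
    intro x hx
    have hG : 0 < Gamma x := Real.Gamma_pos_of_pos hx
    have hxs : (0:ℝ) < x + s := by linarith
    have h := interp_lower hx hs hs1
    rw [Real.div_rpow hx.le hxs.le]
    rw [div_le_div_iff₀ (by positivity) (by positivity)]
    have key : x ^ (1 - s) * x ^ s = x := by
      rw [← Real.rpow_add hx]; norm_num
    calc x ^ (1-s) * (Gamma x * x ^ s) = (x ^ (1-s) * x ^ s) * Gamma x := by ring
      _ = x * Gamma x := by rw [key]
      _ ≤ Gamma (x+s) * (x+s) ^ (1-s) := h
  have hup : ∀ x : ℝ, 0 < x → Gamma (x + s) / (Gamma x * x ^ s) ≤ 1 := by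
    intro x hx
    have hG : 0 < Gamma x := Real.Gamma_pos_of_pos hx
    rw [div_le_one (by positivity)]
    exact interp_upper hx hs hs1
  have hbase : Tendsto (fun x : ℝ => x / (x + s)) atTop (nhds 1) := by
    have h1 : Tendsto (fun x : ℝ => 1 - s / (x + s)) atTop (nhds 1) := by
      have := (tendsto_inv_atTop_zero.comp
        (tendsto_atTop_add_const_right atTop s tendsto_id)).const_mul s
      simpa [div_eq_mul_inv] using (tendsto_const_nhds.sub this)
    refine h1.congr' ?_
    filter_upwards [eventually_gt_atTop 0] with x hx
    field_simp
    ring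
  have hlowt : Tendsto (fun x : ℝ => (x / (x + s)) ^ (1 - s)) atTop (nhds 1) := by
    have hc : ContinuousAt (fun y : ℝ => y ^ (1 - s)) 1 :=
      Real.continuousAt_rpow_const 1 (1 - s) (Or.inl one_ne_zero)
    have := hc.tendsto.comp hbase
    simpa [Function.comp_def] using this
  refine tendsto_of_tendsto_of_tendsto_of_le_of_le' hlowt tendsto_const_nhds ?_ ?_
  · filter_upwards [eventually_gt_atTop 0] with x hx using hlow x hx
  · filter_upwards [eventually_gt_atTop 0] with x hx using hup x hx

lemma gammaRatio (k : ℕ) :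
    Tendsto (fun x : ℝ => Gamma (x + k / 2) / (Gamma x * x ^ ((k : ℝ) / 2)))
      atTop (nhds 1) := by
  induction k using Nat.strong_induction_on with
  | _ k ih =>
    match k with
    | 0 =>
      refine tendsto_const_nhds.congr' ?_
      filter_upwards [eventually_gt_atTop (0:ℝ)] with x hx
      have hG : Gamma x ≠ 0 := (Real.Gamma_pos_of_pos hx).ne'
      simp [Real.rpow_zero, div_self, hG]
    | 1 => simpa using wendel01 (s := 1/2) (by norm_num) (by norm_num)
    | (k+2) =>
      have h1 : Tendsto (fun x : ℝ => (x + k / 2) / x) atTop (nhds 1) := by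
        have h2 : Tendsto (fun x : ℝ => 1 + (k:ℝ)/2 / x) atTop (nhds 1) := by
          simpa [div_eq_mul_inv] using tendsto_const_nhds.add (tendsto_inv_atTop_zero.const_mul ((k:ℝ)/2))
        refine h2.congr' ?_
        filter_upwards [eventually_gt_atTop (0:ℝ)] with x hx
        field_simp
      have := (h1.mul (ih k (by omega)))
      rw [mul_one] at this
      refine this.congr' ?_
      filter_upwards [eventually_gt_atTop (0:ℝ)] with x hx
      have hG : (0:ℝ) < Gamma x := Real.Gamma_pos_of_pos hx
      have hxk : (0:ℝ) < x + k / 2 := by positivity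
      have e1 : x + ((k:ℕ)+2:ℕ) / 2 = (x + (k:ℝ)/2) + 1 := by push_cast; ring
      have e2 : Gamma ((x + (k:ℝ)/2) + 1) = (x + k/2) * Gamma (x + k/2) :=
        Real.Gamma_add_one hxk.ne'
      have e4 : x ^ ((((k:ℕ)+2:ℕ):ℝ) / 2) = x ^ ((k:ℝ)/2) * x := by
        push_cast
        rw [show ((k:ℝ)+2)/2 = (k:ℝ)/2 + 1 by ring, Real.rpow_add hx, Real.rpow_one]
      rw [e1, e2, e4]
      field_simp

noncomputable def qq (k N : ℕ) : ℝ :=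
  ∏ i ∈ Finset.range k, (((N:ℝ) - i)^2 / (2*(N:ℝ)*((N:ℝ)-(k:ℝ)+2)))

lemma cast_factmul (k N : ℕ) (h : k ≤ N) :
    ((k.factorial * N.choose k : ℕ) : ℝ) = ∏ i ∈ Finset.range k, ((N:ℝ) - i) := by
  rw [← Nat.descFactorial_eq_factorial_mul_choose, Nat.descFactorial_eq_prod_range,
    Nat.cast_prod]
  refine Finset.prod_congr rfl fun i hi => ?_
  rw [Nat.cast_sub (le_trans (Finset.mem_range.mp hi).le h)]

lemma lin_ratio (c d : ℝ) :
    Filter.Tendsto (fun N : ℕ => ((N:ℝ) + c) / ((N:ℝ) + d)) Filter.atTop (nhds 1) := by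
  have hN : Filter.Tendsto (fun N : ℕ => (N:ℝ)) Filter.atTop Filter.atTop :=
    tendsto_natCast_atTop_atTop
  have hc : Filter.Tendsto (fun N : ℕ => c / (N:ℝ)) Filter.atTop (nhds 0) := by
    simpa [div_eq_mul_inv] using (tendsto_inv_atTop_zero.comp hN).const_mul c
  have hd : Filter.Tendsto (fun N : ℕ => d / (N:ℝ)) Filter.atTop (nhds 0) := by
    simpa [div_eq_mul_inv] using (tendsto_inv_atTop_zero.comp hN).const_mul d
  have h1 : Filter.Tendsto (fun N : ℕ => (1 + c/(N:ℝ)) / (1 + d/(N:ℝ)))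
      Filter.atTop (nhds 1) := by
    have := ((tendsto_const_nhds (x := (1:ℝ))).add hc).div
      ((tendsto_const_nhds (x := (1:ℝ))).add hd) (by norm_num)
    simpa [Pi.div_def] using this
  refine h1.congr' ?_
  have hev : ∀ᶠ N : ℕ in Filter.atTop, (0:ℝ) < (N:ℝ) + d ∧ (0:ℝ) < (N:ℝ) := by
    filter_upwards [(hN.eventually_gt_atTop (max 0 (-d)))] with N hNd
    constructor
    · have := lt_of_le_of_lt (le_max_right 0 (-d)) hNd; linarith
    · exact lt_of_le_of_lt (le_max_left 0 (-d)) hNd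
  filter_upwards [hev] with N ⟨h2, h3⟩
  field_simp

lemma qq_tendsto (k : ℕ) :
    Filter.Tendsto (fun N : ℕ => qq k N) Filter.atTop (nhds ((1/2:ℝ)^k)) := by
  have h : ∀ i ∈ Finset.range k, Filter.Tendsto
      (fun N : ℕ => ((N:ℝ) - i)^2 / (2*(N:ℝ)*((N:ℝ)-(k:ℝ)+2))) Filter.atTop (nhds (1/2)) := by
    intro i _
    have h1 := (lin_ratio (-(i:ℝ)) 0).mul (lin_ratio (-(i:ℝ)) (2-(k:ℝ)))
    have h2 := h1.div_const 2
    rw [one_mul, show ((1:ℝ)/2) = 1/2 from rfl] at h2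
    refine h2.congr' ?_
    filter_upwards [Filter.eventually_gt_atTop (k+2)] with N hN
    have hkN : (k:ℝ) < N := by exact_mod_cast lt_trans (by omega) hN
    have hN0 : (0:ℝ) < (N:ℝ) := lt_of_le_of_lt (by positivity) hkN
    have h4 : (N:ℝ) + 0 ≠ 0 := by linarith
    have h5 : (N:ℝ) + (2 - k) ≠ 0 := by linarith
    show ((N:ℝ) + -(i:ℝ)) / ((N:ℝ) + 0) * (((N:ℝ) + -(i:ℝ)) / ((N:ℝ) + (2 - (k:ℝ)))) / 2
      = ((N:ℝ) - i)^2 / (2*(N:ℝ)*((N:ℝ)-(k:ℝ)+2))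
    have e : ((N:ℝ)+0) * ((N:ℝ)+(2-(k:ℝ))) * 2 = 2*(N:ℝ)*((N:ℝ)-(k:ℝ)+2) := by ring
    rw [div_mul_div_comm, div_div, e]
    congr 1
    ring
  have := tendsto_finset_prod (Finset.range k) h
  simpa [qq, Finset.prod_const] using this

lemma sqrt_qq (k N : ℕ) (h : k + 1 ≤ N) :
    Real.sqrt (qq k N) = ((k.factorial * N.choose k : ℕ) : ℝ) *
      (4*(N:ℝ)) ^ (-(k:ℝ)/2) * (((N:ℝ)-(k:ℝ))/2+1) ^ (-(k:ℝ)/2) := by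
  have hkN : (k:ℝ) < (N:ℝ) := by exact_mod_cast h
  have hN0 : (0:ℝ) < (N:ℝ) := lt_of_le_of_lt (by positivity) hkN
  have hx : (0:ℝ) < ((N:ℝ)-(k:ℝ))/2+1 := by linarith
  have h4N : (0:ℝ) < 4*(N:ℝ) := by linarith
  set D : ℝ := ((k.factorial * N.choose k : ℕ) : ℝ) with hD
  have hDnn : 0 ≤ D := Nat.cast_nonneg _
  set m : ℝ := D * (4*(N:ℝ)) ^ (-(k:ℝ)/2) * (((N:ℝ)-(k:ℝ))/2+1) ^ (-(k:ℝ)/2) with hm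
  have hmnn : 0 ≤ m := by
    apply mul_nonneg (mul_nonneg hDnn _) _ <;> exact Real.rpow_nonneg (by linarith) _
  have hsq : m ^ 2 = qq k N := by
    have e1 : ((4*(N:ℝ)) ^ (-(k:ℝ)/2)) ^ 2 = ((4*(N:ℝ)) ^ k)⁻¹ := by
      rw [← Real.rpow_natCast ((4*(N:ℝ)) ^ (-(k:ℝ)/2)) 2, ← Real.rpow_mul h4N.le]
      rw [show (-(k:ℝ)/2) * (2:ℕ) = -(k:ℝ) by push_cast; ring]
      rw [Real.rpow_neg h4N.le, Real.rpow_natCast]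
    have e2 : ((((N:ℝ)-(k:ℝ))/2+1) ^ (-(k:ℝ)/2)) ^ 2 = ((((N:ℝ)-(k:ℝ))/2+1) ^ k)⁻¹ := by
      rw [← Real.rpow_natCast ((((N:ℝ)-(k:ℝ))/2+1) ^ (-(k:ℝ)/2)) 2, ← Real.rpow_mul hx.le]
      rw [show (-(k:ℝ)/2) * (2:ℕ) = -(k:ℝ) by push_cast; ring]
      rw [Real.rpow_neg hx.le, Real.rpow_natCast]
    have e3 : D ^ 2 = ∏ i ∈ Finset.range k, ((N:ℝ) - i) ^ 2 := by
      rw [hD, cast_factmul k N (by omega), ← Finset.prod_pow]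
    have e4 : (4*(N:ℝ)) ^ k * (((N:ℝ)-(k:ℝ))/2+1) ^ k = (2*(N:ℝ)*((N:ℝ)-(k:ℝ)+2)) ^ k := by
      rw [← mul_pow]; congr 1; ring
    calc m ^ 2 = D ^ 2 * (((4*(N:ℝ)) ^ (-(k:ℝ)/2)) ^ 2 * ((((N:ℝ)-(k:ℝ))/2+1) ^ (-(k:ℝ)/2)) ^ 2) := by
          rw [hm]; ring
      _ = (∏ i ∈ Finset.range k, ((N:ℝ) - i) ^ 2) / ((4*(N:ℝ)) ^ k * (((N:ℝ)-(k:ℝ))/2+1) ^ k) := by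
          rw [e1, e2, e3]; field_simp
      _ = (∏ i ∈ Finset.range k, ((N:ℝ) - i) ^ 2) / (2*(N:ℝ)*((N:ℝ)-(k:ℝ)+2)) ^ k := by rw [e4]
      _ = qq k N := by
          rw [qq, Finset.prod_div_distrib, Finset.prod_const, Finset.card_range]
  rw [← hsq, Real.sqrt_sq hmnn]

/-- With `u^k(B^N_1) := k!·ω_k·π^{-k}·(4N)^{-k/2}·μ_k(B^N_1)` and
`μ_k(B^N_1) = (ω_N/ω_{N-k})·C(N,k)`, one has `u^k(B^N_1) → ω_k/(2π)^{k/2}` as `N → ∞`. -/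
theorem u_pow_ball_limit (k : ℕ) :
    Tendsto (fun N : ℕ =>
        (k.factorial : ℝ) * unitBallVol k * π ^ (-(k : ℝ)) * (4 * N) ^ (-(k : ℝ) / 2) *
          (unitBallVol N / unitBallVol (N - k) * (N.choose k : ℝ)))
      atTop (nhds (unitBallVol k / (2 * π) ^ ((k : ℝ) / 2))) := by
  have hπ : (0:ℝ) < π := pi_pos
  -- the Gamma-ratio factor
  have hxx : Tendsto (fun N : ℕ => ((N:ℝ)-(k:ℝ))/2+1) atTop atTop := by
    have h1 : Tendsto (fun N : ℕ => (N:ℝ) + (-(k:ℝ))) atTop atTop :=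
      tendsto_atTop_add_const_right atTop _ tendsto_natCast_atTop_atTop
    have h2 := h1.atTop_div_const (by norm_num : (0:ℝ) < 2)
    have h3 := tendsto_atTop_add_const_right atTop (1:ℝ) h2
    refine h3.congr fun N => ?_
    ring_nf
  have hR : Tendsto (fun N : ℕ =>
      Gamma ((((N:ℝ)-(k:ℝ))/2+1) + (k:ℝ)/2) /
        (Gamma (((N:ℝ)-(k:ℝ))/2+1) * (((N:ℝ)-(k:ℝ))/2+1) ^ ((k:ℝ)/2)))
      atTop (nhds 1) := (gammaRatio k).comp hxx
  -- the sqrt factor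
  have hS : Tendsto (fun N : ℕ => Real.sqrt (qq k N)) atTop
      (nhds (Real.sqrt ((1/2:ℝ)^k))) :=
    (Real.continuous_sqrt.continuousAt.tendsto).comp (qq_tendsto k)
  -- combined limit
  have hG : Tendsto (fun N : ℕ =>
      unitBallVol k * (π ^ (-(k:ℝ)) * Real.sqrt π ^ k) * Real.sqrt (qq k N) /
        (Gamma ((((N:ℝ)-(k:ℝ))/2+1) + (k:ℝ)/2) /
          (Gamma (((N:ℝ)-(k:ℝ))/2+1) * (((N:ℝ)-(k:ℝ))/2+1) ^ ((k:ℝ)/2))))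
      atTop (nhds (unitBallVol k * (π ^ (-(k:ℝ)) * Real.sqrt π ^ k)
        * Real.sqrt ((1/2:ℝ)^k) / 1)) :=
    (tendsto_const_nhds.mul hS).div hR one_ne_zero
  -- identify the limit value
  have hval : unitBallVol k * (π ^ (-(k:ℝ)) * Real.sqrt π ^ k) * Real.sqrt ((1/2:ℝ)^k) / 1
      = unitBallVol k / (2 * π) ^ ((k : ℝ) / 2) := by
    have e1 : Real.sqrt π ^ k = π ^ ((k:ℝ)/2) := by
      rw [Real.sqrt_eq_rpow, ← Real.rpow_natCast (π ^ ((1:ℝ)/2)) k, ← Real.rpow_mul hπ.le]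
      congr 1
      push_cast; ring
    have e2 : Real.sqrt ((1/2:ℝ)^k) = ((2:ℝ) ^ ((k:ℝ)/2))⁻¹ := by
      have h12 : ((1:ℝ)/2)^k = (2:ℝ)^(-(k:ℝ)) := by
        rw [Real.rpow_neg (by norm_num), Real.rpow_natCast, div_pow, one_pow, one_div]
      rw [h12, Real.sqrt_eq_rpow, ← Real.rpow_mul (by norm_num : (0:ℝ) ≤ 2),
        show (-(k:ℝ)) * (1/2) = -((k:ℝ)/2) by ring, Real.rpow_neg (by norm_num)]
    have e3 : (2 * π) ^ ((k:ℝ)/2) = 2 ^ ((k:ℝ)/2) * π ^ ((k:ℝ)/2) :=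
      Real.mul_rpow (by norm_num) hπ.le
    have e4 : π ^ (-(k:ℝ)) * π ^ ((k:ℝ)/2) = (π ^ ((k:ℝ)/2))⁻¹ := by
      rw [← Real.rpow_add hπ, show -(k:ℝ)+(k:ℝ)/2 = -((k:ℝ)/2) by ring,
        Real.rpow_neg hπ.le]
    have hp1 : (0:ℝ) < π ^ ((k:ℝ)/2) := Real.rpow_pos_of_pos hπ _
    have hp2 : (0:ℝ) < (2:ℝ) ^ ((k:ℝ)/2) := Real.rpow_pos_of_pos (by norm_num) _
    rw [e1, e2, e3, div_one, mul_assoc, e4,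
      eq_div_iff (mul_pos hp2 hp1).ne']
    field_simp
  rw [hval] at hG
  -- eventual equality
  refine hG.congr' ?_
  filter_upwards [eventually_ge_atTop (k+1)] with N hN
  have hkN : (k:ℝ) < (N:ℝ) := by exact_mod_cast hN
  have hN0 : (0:ℝ) < (N:ℝ) := lt_of_le_of_lt (by positivity) hkN
  have hx : (0:ℝ) < ((N:ℝ)-(k:ℝ))/2+1 := by linarith
  have hΓx : (0:ℝ) < Gamma (((N:ℝ)-(k:ℝ))/2+1) := Real.Gamma_pos_of_pos hx
  have hΓxk : (0:ℝ) < Gamma ((((N:ℝ)-(k:ℝ))/2+1) + (k:ℝ)/2) :=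
    Real.Gamma_pos_of_pos (by positivity)
  have hsπ : (0:ℝ) < Real.sqrt π := Real.sqrt_pos.mpr hπ
  have hcast : ((N - k : ℕ) : ℝ) = (N:ℝ) - (k:ℝ) := by
    rw [Nat.cast_sub (by omega)]
  -- the ratio of ball volumes
  have key1 : unitBallVol N / unitBallVol (N-k)
      = Real.sqrt π ^ k * Gamma (((N:ℝ)-(k:ℝ))/2+1)
        / Gamma ((((N:ℝ)-(k:ℝ))/2+1) + (k:ℝ)/2) := by
    rw [unitBallVol_eq N, unitBallVol_eq (N-k), hcast]
    have eN : ((N:ℝ))/2 + 1 = (((N:ℝ)-(k:ℝ))/2+1) + (k:ℝ)/2 := by ring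
    have eNk : (((N:ℝ)-(k:ℝ)))/2 + 1 = (((N:ℝ)-(k:ℝ))/2+1) := rfl
    rw [eN, eNk]
    have epow : Real.sqrt π ^ N = Real.sqrt π ^ (N-k) * Real.sqrt π ^ k := by
      rw [← pow_add]; congr 1; omega
    rw [epow]
    have h1 : Real.sqrt π ^ (N-k) ≠ 0 := by positivity
    rw [div_div_div_comm, mul_div_cancel_left₀ _ h1, div_div_eq_mul_div]
  have key2 := sqrt_qq k N hN
  rw [key1, key2]
  have erp : (((N:ℝ)-(k:ℝ))/2+1) ^ (-(k:ℝ)/2)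
      = ((((N:ℝ)-(k:ℝ))/2+1) ^ ((k:ℝ)/2))⁻¹ := by
    rw [show -(k:ℝ)/2 = -((k:ℝ)/2) by ring, Real.rpow_neg hx.le]
  have hrp : (0:ℝ) < (((N:ℝ)-(k:ℝ))/2+1) ^ ((k:ℝ)/2) := Real.rpow_pos_of_pos hx _
  rw [erp]
  have hb : (0:ℝ) < 1 + (k:ℝ) * (-1 / 2) + (N:ℝ) * (1 / 2) := by linarith
  have hbn : ((1:ℝ) + (k:ℝ) * (-1 / 2) + (N:ℝ) * (1 / 2)) ^ ((k:ℝ) * (1 / 2)) ≠ 0 :=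
    (Real.rpow_pos_of_pos hb _).ne'
  field_simp
  have hA : (0:ℝ) < ((N:ℝ) - (k:ℝ) + 2)/2 := by linarith
  have hAk : (0:ℝ) < (((N:ℝ) - (k:ℝ) + 2)/2) ^ ((k:ℝ)/2) := Real.rpow_pos_of_pos hA _
  have hΓb : (0:ℝ) < Gamma (((N:ℝ) - (k:ℝ) + 2 + (k:ℝ))/2) :=
    Real.Gamma_pos_of_pos (by linarith)
  rw [div_eq_div_iff (mul_pos hAk hΓb).ne' hΓb.ne']
  push_cast
  ring
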